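/- Let 𝒯 = ({J_1,…,J_ℓ}, T) be a tree decomposition rooted at r, let A_1,…,A_m be n×n real symmetric matrices, and for each i let (A_{i,1},…,A_{i,ℓ}) be a splitting of A_i on 𝒯. Then the following are equivalent: (a) there exist u ∈ ℝ^m and a family (V_i)_{i ≠ r}, with V_i real symmetric indexed by (J_i ∩ J_{p(i)}) × (J_i ∩ J_{p(i)}), not all of u and the V_i zero, such that for every node j: Σ_{i=1}^m u_i A_{i,j} + ι_j(V_j) − Σ_{c ∈ ch(j)} ι_j(V_c) = 0 (the term ι_j(V_j) being absent when j = r); (b) there exists y ∈ ℝ^m with y ≠ 0 and Σ_{i=1}^m y_i A_i = 0. -/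

import Mathlib

/-!
Extend every local matrix by zero to an `n × n` matrix. A splitting of a symmetric `M` with
symmetric parts then sums back to `M` exactly: the difference `N` is symmetric, and testing the
splitting identity against `N` itself gives `tr (Nᵀ N) = 0`.

With `B_j` the zero extension of `Σ_i u_i A_{i,j}`, the node equations say that each `V_c` carries
the flow from `c` to its parent. Summed over the subtree below `j` they telescope to
`Σ_{k ≤ j} B_k = -ι(V_j)`. At the root this is `Σ_i u_i A_i = 0`, and for `u = 0` it forces
every `V_j` to vanish. Conversely, if `Σ_i y_i A_i = 0`, then `V_c := -Σ_{k ≤ c} B_k` solves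
the node equations. Running intersection puts it on `J_c ∩ J_{p(c)}`: a nonzero entry `(a, b)`
needs a bag containing `a, b` below `c` and, the total being zero, another one outside the
subtree, and the tree path between them passes through `c` and `p(c)`.
-/

open Matrix

def IsTreeDecomp {n ℓ : ℕ} (G : SimpleGraph (Fin n)) (T : SimpleGraph (Fin ℓ))
    (J : Fin ℓ → Finset (Fin n)) : Prop :=
  T.IsTree ∧
  (∀ v : Fin n, ∃ k, v ∈ J k) ∧
  (∀ u v : Fin n, G.Adj u v → ∃ k, u ∈ J k ∧ v ∈ J k) ∧
  (∀ (i j : Fin ℓ) (w : T.Walk i j), w.IsPath →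
    ∀ v : Fin n, v ∈ J i → v ∈ J j → ∀ k ∈ w.support, v ∈ J k)

def psub {n : ℕ} (X : Matrix (Fin n) (Fin n) ℝ) (s : Finset (Fin n)) :
    Matrix s s ℝ :=
  X.submatrix Subtype.val Subtype.val

def IsRootedAt {ℓ : ℕ} (T : SimpleGraph (Fin ℓ)) (r : Fin ℓ) (p : Fin ℓ → Fin ℓ) : Prop :=
  p r = r ∧
  (∀ j, j ≠ r → T.Adj j (p j)) ∧
  (∀ j, j ≠ r → ∀ w : T.Walk j r, w.IsPath → p j ∈ w.support) ∧
  (∀ i j, T.Adj i j ↔ ((i ≠ r ∧ p i = j) ∨ (j ≠ r ∧ p j = i)))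

/-- Entry `(u,v)` of the zero padding `ι (Y i)` of the overlap-indexed matrix `Y i`. -/
def padEntry {n ℓ : ℕ} (J : Fin ℓ → Finset (Fin n)) (p : Fin ℓ → Fin ℓ)
    (Y : (i : Fin ℓ) → Matrix ↥(J i ∩ J (p i)) ↥(J i ∩ J (p i)) ℝ)
    (i : Fin ℓ) (u v : Fin n) : ℝ :=
  if h : u ∈ J i ∩ J (p i) ∧ v ∈ J i ∩ J (p i) then Y i ⟨u, h.1⟩ ⟨v, h.2⟩ else 0

/-- `Σ_j Ms j • X[J j, J j] = M • X` for every symmetric `X`, where `M • N = tr(Mᵀ N)`. -/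
def IsSplitting {n ℓ : ℕ} (J : Fin ℓ → Finset (Fin n)) (M : Matrix (Fin n) (Fin n) ℝ)
    (Ms : (j : Fin ℓ) → Matrix ↥(J j) ↥(J j) ℝ) : Prop :=
  ∀ X : Matrix (Fin n) (Fin n) ℝ, X.IsSymm →
    ∑ j : Fin ℓ, Matrix.trace ((Ms j)ᵀ * psub X (J j)) = Matrix.trace (Mᵀ * X)

section ZeroExtend

variable {α R : Type*} [DecidableEq α] [Zero R] (s : Finset α)

def zeroExtend (M : Matrix s s R) : Matrix α α R :=
  Matrix.of fun a b => if h : a ∈ s ∧ b ∈ s then M ⟨a, h.1⟩ ⟨b, h.2⟩ else 0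

variable {s}

@[simp]
theorem zeroExtend_apply_of_mem {M : Matrix s s R} {a b : α} (ha : a ∈ s) (hb : b ∈ s) :
    zeroExtend s M a b = M ⟨a, ha⟩ ⟨b, hb⟩ :=
  dif_pos ⟨ha, hb⟩

theorem zeroExtend_apply_of_not_mem {M : Matrix s s R} {a b : α} (h : ¬(a ∈ s ∧ b ∈ s)) :
    zeroExtend s M a b = 0 :=
  dif_neg h

theorem mem_of_zeroExtend_apply_ne_zero {M : Matrix s s R} {a b : α}
    (h : zeroExtend s M a b ≠ 0) : a ∈ s ∧ b ∈ s :=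
  not_not.1 fun h' => h (zeroExtend_apply_of_not_mem h')

theorem zeroExtend_eq_zero_iff {M : Matrix s s R} : zeroExtend s M = 0 ↔ M = 0 := by
  refine ⟨fun h => ?_, fun h => ?_⟩
  · ext x y
    simpa using congr_fun₂ h x y
  · ext a b
    by_cases hab : a ∈ s ∧ b ∈ s
    · simp [h, hab.1, hab.2]
    · simp [zeroExtend_apply_of_not_mem hab]

theorem Matrix.IsSymm.zeroExtend {M : Matrix s s R} (hM : M.IsSymm) :
    (_root_.zeroExtend s M).IsSymm := by
  ext a b
  by_cases h : a ∈ s ∧ b ∈ s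
  · simp [h.1, h.2, hM.apply]
  · rw [transpose_apply, zeroExtend_apply_of_not_mem h, zeroExtend_apply_of_not_mem (by tauto)]

end ZeroExtend

theorem zeroExtend_sum_smul {α R ι : Type*} [DecidableEq α] [Semiring R] {s : Finset α}
    (c : ι → R) (M : ι → Matrix s s R) (t : Finset ι) :
    zeroExtend s (∑ i ∈ t, c i • M i) = ∑ i ∈ t, c i • zeroExtend s (M i) := by
  ext a b
  by_cases h : a ∈ s ∧ b ∈ s
  · simp [h.1, h.2, Matrix.sum_apply]
  · simp [zeroExtend_apply_of_not_mem h, Matrix.sum_apply]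

theorem Matrix.isSymm_sum {ι α R : Type*} [AddCommMonoid R] (s : Finset ι)
    {M : ι → Matrix α α R} (h : ∀ i ∈ s, (M i).IsSymm) : (∑ i ∈ s, M i).IsSymm := by
  rw [IsSymm, transpose_sum]
  exact Finset.sum_congr rfl fun i hi => (h i hi).eq

theorem padEntry_eq_zeroExtend {n ℓ : ℕ} (J : Fin ℓ → Finset (Fin n))
    (p : Fin ℓ → Fin ℓ) (V : (i : Fin ℓ) → Matrix ↥(J i ∩ J (p i)) ↥(J i ∩ J (p i)) ℝ)
    (i : Fin ℓ) (a b : Fin n) :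
    padEntry J p V i a b = zeroExtend (J i ∩ J (p i)) (V i) a b :=
  rfl

section Splitting

variable {n : ℕ}

theorem zeroExtend_psub {s : Finset (Fin n)} {X : Matrix (Fin n) (Fin n) ℝ}
    (h : ∀ a b, X a b ≠ 0 → a ∈ s ∧ b ∈ s) : zeroExtend s (psub X s) = X := by
  ext a b
  by_cases hab : a ∈ s ∧ b ∈ s
  · simp [hab.1, hab.2, psub]
  · rw [zeroExtend_apply_of_not_mem hab]
    exact (not_not.1 (mt (h a b) hab)).symm

theorem trace_transpose_zeroExtend_mul (s : Finset (Fin n)) (M : Matrix s s ℝ)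
    (X : Matrix (Fin n) (Fin n) ℝ) :
    trace ((zeroExtend s M)ᵀ * X) = trace (Mᵀ * psub X s) := by
  have hZ : ∀ x y : s, M x y = zeroExtend s M x y := fun x y =>
    (zeroExtend_apply_of_mem x.2 y.2).symm
  have hvanish : ∀ a b, a ∉ s ∨ b ∉ s → zeroExtend s M b a * X b a = 0 := fun a b h => by
    rw [zeroExtend_apply_of_not_mem (by tauto), zero_mul]
  simp only [trace, diag, mul_apply, transpose_apply, hZ, psub, submatrix_apply]
  rw [Finset.sum_coe_sort s (fun a => ∑ y : s, zeroExtend s M y a * X y a),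
    ← Finset.sum_subset (Finset.subset_univ s) fun a _ ha =>
      Finset.sum_eq_zero fun b _ => hvanish a b (.inl ha)]
  refine Finset.sum_congr rfl fun a _ => ?_
  rw [Finset.sum_coe_sort s (fun b => zeroExtend s M b a * X b a),
    Finset.sum_subset (Finset.subset_univ s) fun b _ hb => hvanish a b (.inr hb)]

theorem IsSplitting.sum_zeroExtend {ℓ : ℕ} {J : Fin ℓ → Finset (Fin n)}
    {M : Matrix (Fin n) (Fin n) ℝ} {Ms : (j : Fin ℓ) → Matrix (J j) (J j) ℝ}
    (h : IsSplitting J M Ms) (hM : M.IsSymm) (hMs : ∀ j, (Ms j).IsSymm) :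
    ∑ j, zeroExtend (J j) (Ms j) = M := by
  set N := ∑ j, zeroExtend (J j) (Ms j) - M
  have hN : N.IsSymm := (isSymm_sum _ fun j _ => (hMs j).zeroExtend).sub hM
  have htrace : trace (Nᴴ * N) = 0 := by
    rw [conjTranspose_eq_transpose_of_trivial]
    change trace ((∑ j, zeroExtend (J j) (Ms j) - M)ᵀ * N) = 0
    rw [transpose_sub, transpose_sum, sub_mul, Finset.sum_mul, trace_sub, trace_sum]
    simp only [trace_transpose_zeroExtend_mul, h N hN, sub_self]
  exact sub_eq_zero.1 (trace_conjTranspose_mul_self_eq_zero_iff.1 htrace)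

theorem IsSplitting.sum_zeroExtend_sum_smul {ℓ m : ℕ} {J : Fin ℓ → Finset (Fin n)}
    {A : Fin m → Matrix (Fin n) (Fin n) ℝ}
    {As : (i : Fin m) → (j : Fin ℓ) → Matrix (J j) (J j) ℝ}
    (h : ∀ i, IsSplitting J (A i) (As i)) (hA : ∀ i, (A i).IsSymm)
    (hAs : ∀ i j, (As i j).IsSymm) (u : Fin m → ℝ) :
    ∑ j, zeroExtend (J j) (∑ i, u i • As i j) = ∑ i, u i • A i := by
  simp only [zeroExtend_sum_smul]
  rw [Finset.sum_comm]
  simp only [← Finset.smul_sum, fun i => (h i).sum_zeroExtend (hA i) (hAs i)]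

end Splitting

section RootedTree

variable {ℓ : ℕ} {T : SimpleGraph (Fin ℓ)} {r : Fin ℓ} {p : Fin ℓ → Fin ℓ}
  {M : Type*} [AddCommGroup M]

open Classical in
noncomputable def subtree (p : Fin ℓ → Fin ℓ) (j : Fin ℓ) : Finset (Fin ℓ) :=
  Finset.univ.filter fun k => ∃ t, p^[t] k = j

def children (r : Fin ℓ) (p : Fin ℓ → Fin ℓ) (j : Fin ℓ) : Finset (Fin ℓ) :=
  Finset.univ.filter fun c => c ≠ r ∧ p c = j

@[simp]
theorem mem_subtree {j k : Fin ℓ} : k ∈ subtree p j ↔ ∃ t, p^[t] k = j := by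
  simp [subtree]

@[simp]
theorem mem_children {j c : Fin ℓ} : c ∈ children r p j ↔ c ≠ r ∧ p c = j := by
  simp [children]

theorem self_mem_subtree (j : Fin ℓ) : j ∈ subtree p j :=
  mem_subtree.2 ⟨0, rfl⟩

theorem mem_subtree_of_parent_mem {j k : Fin ℓ} (hk : p k ∈ subtree p j) :
    k ∈ subtree p j := by
  obtain ⟨t, ht⟩ := mem_subtree.1 hk
  exact mem_subtree.2 ⟨t + 1, ht⟩

theorem mem_subtree_trans {j c k : Fin ℓ} (hk : k ∈ subtree p c)
    (hc : c ∈ subtree p j) : k ∈ subtree p j := by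
  obtain ⟨s, rfl⟩ := mem_subtree.1 hk
  obtain ⟨t, rfl⟩ := mem_subtree.1 hc
  exact mem_subtree.2 ⟨t + s, Function.iterate_add_apply p t s k⟩

theorem parent_mem_subtree {j k : Fin ℓ} (hk : k ∈ subtree p j) (hkj : k ≠ j) :
    p k ∈ subtree p j := by
  obtain ⟨_ | t, ht⟩ := mem_subtree.1 hk
  · exact absurd ht hkj
  · exact mem_subtree.2 ⟨t, ht⟩

theorem mem_subtree_or_mem_subtree {a b k : Fin ℓ} (ha : k ∈ subtree p a)
    (hb : k ∈ subtree p b) : a ∈ subtree p b ∨ b ∈ subtree p a := by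
  obtain ⟨s, rfl⟩ := mem_subtree.1 ha
  obtain ⟨t, rfl⟩ := mem_subtree.1 hb
  rcases le_total s t with h | h
  · refine .inl (mem_subtree.2 ⟨t - s, ?_⟩)
    rw [← Function.iterate_add_apply, Nat.sub_add_cancel h]
  · refine .inr (mem_subtree.2 ⟨s - t, ?_⟩)
    rw [← Function.iterate_add_apply, Nat.sub_add_cancel h]

namespace IsRootedAt

theorem ne_root_of_mem_subtree (hroot : IsRootedAt T r p) {j k : Fin ℓ}
    (hk : k ∈ subtree p j) (hkj : k ≠ j) : k ≠ r := by
  rintro rfl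
  obtain ⟨t, ht⟩ := mem_subtree.1 hk
  exact hkj (by rw [← ht, Function.iterate_fixed hroot.1])

theorem dist_parent_lt (hroot : IsRootedAt T r p) (hT : T.Connected) {j : Fin ℓ} (hj : j ≠ r) :
    T.dist (p j) r < T.dist j r := by
  obtain ⟨w, hw, hlen⟩ := hT.exists_path_of_dist j r
  have hmem : p j ∈ w.support := hroot.2.2.1 j hj w hw
  calc T.dist (p j) r ≤ (w.dropUntil (p j) hmem).length := SimpleGraph.dist_le _
    _ < w.length := w.length_dropUntil_lt_length hmem (hroot.2.1 j hj).ne.symm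
    _ = T.dist j r := hlen

theorem dist_iterate_le (hroot : IsRootedAt T r p) (hT : T.Connected) (t : ℕ) (k : Fin ℓ) :
    T.dist (p^[t] k) r ≤ T.dist k r := by
  induction t generalizing k with
  | zero => rfl
  | succ t ih =>
    rw [Function.iterate_succ_apply]
    refine (ih (p k)).trans ?_
    by_cases hk : k = r
    · rw [hk, hroot.1]
    · exact (hroot.dist_parent_lt hT hk).le

theorem parent_not_mem_subtree (hroot : IsRootedAt T r p) (hT : T.Connected) {c : Fin ℓ}
    (hc : c ≠ r) : p c ∉ subtree p c := fun h => by
  obtain ⟨t, ht⟩ := mem_subtree.1 h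
  have := hroot.dist_iterate_le hT t (p c)
  rw [ht] at this
  exact (hroot.dist_parent_lt hT hc).not_ge this

theorem subtree_root (hroot : IsRootedAt T r p) (hT : T.Connected) :
    subtree p r = Finset.univ := by
  refine Finset.eq_univ_of_forall fun k => ?_
  induction hd : T.dist k r using Nat.strong_induction_on generalizing k with
  | _ d ih =>
    by_cases hk : k = r
    · rw [hk]
      exact self_mem_subtree r
    · exact mem_subtree_of_parent_mem
        (ih _ (hd ▸ hroot.dist_parent_lt hT hk) (p k) rfl)

-- `s(c, p c)` is the only edge of `T` between the subtree of `c` and the rest of the tree.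
theorem mk_parent_mem_edges (hroot : IsRootedAt T r p) {c x y : Fin ℓ} (w : T.Walk x y)
    (hx : x ∈ subtree p c) (hy : y ∉ subtree p c) : s(c, p c) ∈ w.edges := by
  induction w with
  | nil => exact absurd hx hy
  | @cons x z y hadj w ih =>
    rw [SimpleGraph.Walk.edges_cons, List.mem_cons]
    by_cases hz : z ∈ subtree p c
    · exact .inr (ih hz hy)
    left
    rcases (hroot.2.2.2 x z).1 hadj with ⟨-, rfl⟩ | ⟨-, rfl⟩
    · by_cases hxc : x = c
      · rw [hxc]
      · exact absurd (parent_mem_subtree hx hxc) hz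
    · exact absurd (mem_subtree_of_parent_mem hx) hz

theorem children_eq_filter_subtree (hroot : IsRootedAt T r p) (hT : T.Connected)
    {j k : Fin ℓ} (hk : k ∈ subtree p j) :
    children r p k = ((subtree p j).erase j).filter fun c => p c = k := by
  ext c
  simp only [mem_children, Finset.mem_filter, Finset.mem_erase]
  constructor
  · rintro ⟨hcr, rfl⟩
    refine ⟨⟨fun hcj => ?_, mem_subtree_of_parent_mem hk⟩, rfl⟩
    exact hroot.parent_not_mem_subtree hT (hcj ▸ hcr) (hcj ▸ hk)
  · rintro ⟨⟨hcj, hc⟩, rfl⟩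
    exact ⟨hroot.ne_root_of_mem_subtree hc hcj, rfl⟩

theorem eq_of_mem_subtree_of_mem_children (hroot : IsRootedAt T r p) (hT : T.Connected)
    {j c c' : Fin ℓ} (hc : c ∈ children r p j) (hc' : c' ∈ children r p j)
    (h : c ∈ subtree p c') : c = c' := by
  rw [mem_children] at hc hc'
  by_contra hne
  have := parent_mem_subtree h hne
  rw [hc.2, ← hc'.2] at this
  exact hroot.parent_not_mem_subtree hT hc'.1 this

theorem pairwiseDisjoint_subtree_children (hroot : IsRootedAt T r p) (hT : T.Connected)
    (j : Fin ℓ) : (children r p j : Set (Fin ℓ)).PairwiseDisjoint (subtree p) := by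
  intro c hc c' hc' hne
  refine Finset.disjoint_left.2 fun k hk hk' => hne ?_
  rcases mem_subtree_or_mem_subtree hk hk' with h | h
  · exact hroot.eq_of_mem_subtree_of_mem_children hT hc hc' h
  · exact (hroot.eq_of_mem_subtree_of_mem_children hT hc' hc h).symm

theorem biUnion_children_subtree (hroot : IsRootedAt T r p) (hT : T.Connected)
    (j : Fin ℓ) : (children r p j).biUnion (subtree p) = (subtree p j).erase j := by
  ext k
  simp only [Finset.mem_biUnion, Finset.mem_erase]
  constructor
  · rintro ⟨c, hc, hk⟩
    rw [mem_children] at hc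
    have hcj : c ∈ subtree p j := mem_subtree.2 ⟨1, hc.2⟩
    refine ⟨fun hkj => ?_, mem_subtree_trans hk hcj⟩
    exact hroot.parent_not_mem_subtree hT hc.1 (hc.2 ▸ hkj ▸ hk)
  · rintro ⟨hkj, hk⟩
    obtain ⟨t, ht⟩ := mem_subtree.1 hk
    induction t generalizing k with
    | zero => exact absurd ht hkj
    | succ t ih =>
      by_cases hpk : p k = j
      · refine ⟨k, mem_children.2 ⟨fun hkr => hkj ?_, hpk⟩, self_mem_subtree k⟩
        rw [← hpk, hkr, hroot.1]
      · obtain ⟨c, hc, hpkc⟩ := ih (p k) hpk (parent_mem_subtree hk hkj) ht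
        exact ⟨c, hc, mem_subtree_of_parent_mem hpkc⟩


theorem sum_subtree_telescope (hroot : IsRootedAt T r p) (hT : T.Connected)
    (f : Fin ℓ → M) (j : Fin ℓ) :
    ∑ k ∈ subtree p j, ((if k = r then 0 else f k) - ∑ c ∈ children r p k, f c) =
      if j = r then 0 else f j := by
  have hj := self_mem_subtree (p := p) j
  have hroots : ∑ k ∈ subtree p j, (if k = r then 0 else f k) =
      (if j = r then 0 else f j) + ∑ k ∈ (subtree p j).erase j, f k := by
    rw [← Finset.add_sum_erase _ _ hj]
    refine congrArg _ (Finset.sum_congr rfl fun k hk => if_neg ?_)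
    exact hroot.ne_root_of_mem_subtree (Finset.mem_erase.1 hk).2 (Finset.mem_erase.1 hk).1
  have hchildren : ∑ k ∈ subtree p j, ∑ c ∈ children r p k, f c =
      ∑ k ∈ (subtree p j).erase j, f k := by
    rw [← Finset.sum_fiberwise_of_maps_to (g := p) (t := subtree p j)
      fun c hc => parent_mem_subtree (Finset.mem_erase.1 hc).2 (Finset.mem_erase.1 hc).1]
    exact Finset.sum_congr rfl fun k hk => by rw [hroot.children_eq_filter_subtree hT hk]
  rw [Finset.sum_sub_distrib, hroots, hchildren, add_sub_cancel_right]

theorem sum_subtree_eq_add (hroot : IsRootedAt T r p) (hT : T.Connected)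
    (f : Fin ℓ → M) (j : Fin ℓ) :
    ∑ k ∈ subtree p j, f k =
      f j + ∑ c ∈ children r p j, ∑ k ∈ subtree p c, f k := by
  rw [← Finset.sum_biUnion (hroot.pairwiseDisjoint_subtree_children hT j),
    hroot.biUnion_children_subtree hT j, Finset.add_sum_erase _ _ (self_mem_subtree j)]

end IsRootedAt

def IsBalanced (r : Fin ℓ) (p : Fin ℓ → Fin ℓ) (B W : Fin ℓ → M) : Prop :=
  ∀ j, B j + (if j = r then 0 else W j) - ∑ c ∈ children r p j, W c = 0

variable {B W : Fin ℓ → M}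

theorem IsBalanced.sum_subtree (hbal : IsBalanced r p B W) (hroot : IsRootedAt T r p)
    (hT : T.Connected) (j : Fin ℓ) :
    ∑ k ∈ subtree p j, B k = -(if j = r then 0 else W j) := by
  rw [← hroot.sum_subtree_telescope hT W j, ← Finset.sum_neg_distrib]
  refine Finset.sum_congr rfl fun k _ => eq_neg_of_add_eq_zero_left ?_
  rw [← add_sub_assoc, hbal k]

theorem IsRootedAt.isBalanced_neg_sum_subtree (hroot : IsRootedAt T r p) (hT : T.Connected)
    (hsum : ∑ k, B k = 0) : IsBalanced r p B fun c => -∑ k ∈ subtree p c, B k := by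
  intro j
  have hroot_term : (if j = r then 0 else -∑ k ∈ subtree p j, B k) =
      -∑ k ∈ subtree p j, B k := by
    split_ifs with hj
    · rw [hj, hroot.subtree_root hT, hsum, neg_zero]
    · rfl
  rw [hroot_term, hroot.sum_subtree_eq_add hT, Finset.sum_neg_distrib]
  abel

end RootedTree

section TreeDecomposition

variable {n ℓ : ℕ} {G : SimpleGraph (Fin n)} {T : SimpleGraph (Fin ℓ)}
  {J : Fin ℓ → Finset (Fin n)} {r : Fin ℓ} {p : Fin ℓ → Fin ℓ}

theorem IsTreeDecomp.mem_inter_parent_of_mem_subtree (hTD : IsTreeDecomp G T J)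
    (hroot : IsRootedAt T r p) {c x y : Fin ℓ} (hx : x ∈ subtree p c)
    (hy : y ∉ subtree p c) {a : Fin n} (hax : a ∈ J x) (hay : a ∈ J y) :
    a ∈ J c ∩ J (p c) := by
  obtain ⟨w⟩ := hTD.1.connected.preconnected x y
  have hedge := hroot.mk_parent_mem_edges w.bypass hx hy
  have hbag := hTD.2.2.2 x y w.bypass w.bypass_isPath a hax hay
  exact Finset.mem_inter.2 ⟨hbag c (w.bypass.fst_mem_support_of_mem_edges hedge),
    hbag (p c) (w.bypass.snd_mem_support_of_mem_edges hedge)⟩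

theorem IsTreeDecomp.mem_inter_parent_of_sum_subtree_apply_ne_zero
    (hTD : IsTreeDecomp G T J) (hroot : IsRootedAt T r p)
    {B : Fin ℓ → Matrix (Fin n) (Fin n) ℝ}
    (hB : ∀ k a b, B k a b ≠ 0 → a ∈ J k ∧ b ∈ J k)
    (hsum : ∑ k, B k = 0) {c : Fin ℓ} {a b : Fin n}
    (h : (∑ k ∈ subtree p c, B k) a b ≠ 0) :
    a ∈ J c ∩ J (p c) ∧ b ∈ J c ∩ J (p c) := by
  rw [Matrix.sum_apply] at h
  have houtside : ∑ k ∈ (subtree p c)ᶜ, B k a b ≠ 0 := by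
    have := congrFun₂ hsum a b
    rw [Matrix.sum_apply, ← Finset.sum_add_sum_compl (subtree p c)] at this
    intro h'
    exact h (by simpa [h'] using this)
  obtain ⟨x, hx, hBx⟩ := Finset.exists_ne_zero_of_sum_ne_zero h
  obtain ⟨y, hy, hBy⟩ := Finset.exists_ne_zero_of_sum_ne_zero houtside
  rw [Finset.mem_compl] at hy
  exact ⟨hTD.mem_inter_parent_of_mem_subtree hroot hx hy (hB x a b hBx).1 (hB y a b hBy).1,
    hTD.mem_inter_parent_of_mem_subtree hroot hx hy (hB x a b hBx).2 (hB y a b hBy).2⟩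

theorem isBalanced_zeroExtend_iff {m : ℕ}
    (As : (i : Fin m) → (j : Fin ℓ) → Matrix (J j) (J j) ℝ) (u : Fin m → ℝ)
    (V : (i : Fin ℓ) → Matrix ↥(J i ∩ J (p i)) ↥(J i ∩ J (p i)) ℝ) :
    IsBalanced r p (fun j => zeroExtend (J j) (∑ i, u i • As i j))
        (fun c => zeroExtend (J c ∩ J (p c)) (V c)) ↔
      ∀ (j : Fin ℓ) (a b : Fin n) (ha : a ∈ J j) (hb : b ∈ J j),
        (∑ i, u i * As i j ⟨a, ha⟩ ⟨b, hb⟩) +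
            (if j = r then 0 else padEntry J p V j a b) -
          ∑ c ∈ children r p j, padEntry J p V c a b = 0 := by
  refine forall_congr' fun j => ⟨fun h a b ha hb => ?_, fun h => ?_⟩
  · simpa [Matrix.sum_apply, apply_ite (fun M : Matrix (Fin n) (Fin n) ℝ => M a b), ha, hb,
      padEntry_eq_zeroExtend] using congrFun₂ h a b
  ext a b
  simp only [Matrix.sub_apply, Matrix.add_apply, Matrix.sum_apply, Matrix.zero_apply,
    apply_ite (fun M : Matrix (Fin n) (Fin n) ℝ => M a b)]
  by_cases hab : a ∈ J j ∧ b ∈ J j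
  · simpa [hab.1, hab.2, Matrix.sum_apply, padEntry_eq_zeroExtend] using h a b hab.1 hab.2
  -- every term is supported inside `J j × J j`
  have hW : ∀ c, J c ∩ J (p c) ⊆ J j → zeroExtend (J c ∩ J (p c)) (V c) a b = 0 :=
    fun c hc => zeroExtend_apply_of_not_mem fun h => hab ⟨hc h.1, hc h.2⟩
  rw [zeroExtend_apply_of_not_mem hab, hW j Finset.inter_subset_left,
    Finset.sum_eq_zero fun c hc => hW c <| by
      rw [← (mem_children.1 hc).2]
      exact Finset.inter_subset_right]
  simp

end TreeDecomposition

theorem lin_indep_transfer_general {n ℓ m : ℕ} (G : SimpleGraph (Fin n)) (T : SimpleGraph (Fin ℓ))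
    (J : Fin ℓ → Finset (Fin n)) (hTD : IsTreeDecomp G T J)
    (r : Fin ℓ) (p : Fin ℓ → Fin ℓ) (hroot : IsRootedAt T r p)
    (A : Fin m → Matrix (Fin n) (Fin n) ℝ) (hAsymm : ∀ i, (A i).IsSymm)
    (As : (i : Fin m) → (j : Fin ℓ) → Matrix ↥(J j) ↥(J j) ℝ)
    (hAssymm : ∀ i j, (As i j).IsSymm)
    (hsplit : ∀ i, IsSplitting J (A i) (As i)) :
    (∃ (u : Fin m → ℝ)
        (V : (i : Fin ℓ) → Matrix ↥(J i ∩ J (p i)) ↥(J i ∩ J (p i)) ℝ),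
        (∀ i, i ≠ r → (V i).IsSymm) ∧
        ¬(u = 0 ∧ ∀ i, i ≠ r → V i = 0) ∧
        (∀ (j : Fin ℓ) (a b : Fin n) (ha : a ∈ J j) (hb : b ∈ J j),
          (∑ i : Fin m, u i * As i j ⟨a, ha⟩ ⟨b, hb⟩) +
            (if j = r then 0 else padEntry J p V j a b) -
            (∑ c ∈ Finset.univ.filter (fun c => c ≠ r ∧ p c = j),
              padEntry J p V c a b) = 0)) ↔
      (∃ y : Fin m → ℝ, y ≠ 0 ∧ ∑ i : Fin m, y i • A i = 0) := by
  have hT : T.Connected := hTD.1.connected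
  set B : (Fin m → ℝ) → Fin ℓ → Matrix (Fin n) (Fin n) ℝ :=
    fun u j => zeroExtend (J j) (∑ i, u i • As i j)
  have hsumB := IsSplitting.sum_zeroExtend_sum_smul hsplit hAsymm hAssymm
  constructor
  · rintro ⟨u, V, -, hnonzero, hV⟩
    have hS := ((isBalanced_zeroExtend_iff As u V).2 hV).sum_subtree hroot hT
    refine ⟨u, fun hu => hnonzero ⟨hu, fun i hi => ?_⟩, ?_⟩
    · have hB0 : ∀ k, B u k = 0 := fun k => zeroExtend_eq_zero_iff.2 (by simp [hu])
      have hVi := hS i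
      rwa [Finset.sum_eq_zero fun k _ => hB0 k, if_neg hi, zero_eq_neg, zeroExtend_eq_zero_iff]
        at hVi
    · rw [← hsumB, ← hroot.subtree_root hT, hS r, if_pos rfl, neg_zero]
  · rintro ⟨y, hy, hy0⟩
    set S : Fin ℓ → Matrix (Fin n) (Fin n) ℝ := fun c => -∑ k ∈ subtree p c, B y k
    have hsum : ∑ k, B y k = 0 := (hsumB y).trans hy0
    have hS : ∀ c, zeroExtend (J c ∩ J (p c)) (psub (S c) (J c ∩ J (p c))) = S c :=
      fun c => zeroExtend_psub fun a b h =>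
        hTD.mem_inter_parent_of_sum_subtree_apply_ne_zero hroot
          (fun k a b => mem_of_zeroExtend_apply_ne_zero) hsum (neg_ne_zero.1 h)
    refine ⟨y, fun c => psub (S c) (J c ∩ J (p c)), fun c _ => ?_, fun h => hy h.1,
      (isBalanced_zeroExtend_iff As y _).1 ?_⟩
    · exact (isSymm_sum _ fun k _ => (isSymm_sum _ fun i _ =>
        (hAssymm i k).smul (y i)).zeroExtend).neg.submatrix _
    · simpa only [hS] using hroot.isBalanced_neg_sum_subtree hT hsum

/-- linear independence transfers to the converted problem:  there is a
nonzero pair `(u, (V i)_{i ≠ r})` with `Σ_i u i • A i j + ι_j (V j) − Σ_{c ∈ ch(j)} ι_j (V c) = 0`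
for every node `j` (the `ι_j (V j)` term absent at the root), iff there is a nonzero `y`
with `Σ_i y i • A i = 0`. -/
theorem lin_indep_transfer {n ℓ m : ℕ} (G : SimpleGraph (Fin n)) (T : SimpleGraph (Fin ℓ))
    (J : Fin ℓ → Finset (Fin n)) (hTD : IsTreeDecomp G T J)
    (r : Fin ℓ) (p : Fin ℓ → Fin ℓ) (hroot : IsRootedAt T r p)
    (A : Fin m → Matrix (Fin n) (Fin n) ℝ) (hAsymm : ∀ i, (A i).IsSymm)
    (hsparse : ∀ (i : Fin m) (a b : Fin n), A i a b ≠ 0 → a = b ∨ G.Adj a b)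
    (As : (i : Fin m) → (j : Fin ℓ) → Matrix ↥(J j) ↥(J j) ℝ)
    (hAssymm : ∀ i j, (As i j).IsSymm)
    (hsplit : ∀ i, IsSplitting J (A i) (As i)) :
    (∃ (u : Fin m → ℝ)
        (V : (i : Fin ℓ) → Matrix ↥(J i ∩ J (p i)) ↥(J i ∩ J (p i)) ℝ),
        (∀ i, i ≠ r → (V i).IsSymm) ∧
        ¬(u = 0 ∧ ∀ i, i ≠ r → V i = 0) ∧
        (∀ (j : Fin ℓ) (a b : Fin n) (ha : a ∈ J j) (hb : b ∈ J j),
          (∑ i : Fin m, u i * As i j ⟨a, ha⟩ ⟨b, hb⟩) +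
            (if j = r then 0 else padEntry J p V j a b) -
            (∑ c ∈ Finset.univ.filter (fun c => c ≠ r ∧ p c = j),
              padEntry J p V c a b) = 0)) ↔
      (∃ y : Fin m → ℝ, y ≠ 0 ∧ ∑ i : Fin m, y i • A i = 0) :=
  lin_indep_transfer_general G T J hTD r p hroot A hAsymm As hAssymm hsplit
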